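/- arXiv:1604.00912 — 3 statements merged into one kernel-verified Lean document; each statement's English description precedes it below -/
import Mathlib

section
/- Let w ≠ 0 and z be real numbers, and define the reparametrized quantities a* = (1/w) a, b* = b − (z/w) a, m* = w m + (0, z)ᵀ, V* = w² V, and Z*_j = a* q_jᵀ. Then for every visit j: Z*_j m* + b* = Z_j m + b, and for every pair of visits j, j': Z*_j V* Z*_{j'}ᵀ = Z_j V Z_{j'}ᵀ. Consequently, the mean vector and covariance matrix of the Gaussian marginal distribution of the stacked observations (whose mean at visit j is Z_j m + b and whose (j, j') covariance block is Z_j V Z_{j'}ᵀ + δ_{jj'} R) are unchanged by the reparametrization; the two parameter settings yield an equivalent model. -/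
open Matrix

/-- The reparametrization `a* = (1/w) a`, `b* = b − (z/w) a`, `m* = w m + (0, z)ᵀ`,
`V* = w² V` leaves the marginal mean `Zⱼ m + b` of each visit and every covariance block
`Zⱼ V Zⱼ'ᵀ + δ_{jj'} R` unchanged, so the two parameter settings yield an equivalent model. -/
theorem stmt_13 {K v : ℕ} (hK : 0 < K) (hv : 0 < v)
    (a b : Fin K → ℝ) (m : Fin 2 → ℝ)
    (V : Matrix (Fin 2) (Fin 2) ℝ) (hV : V.PosDef)
    (R : Matrix (Fin K) (Fin K) ℝ) (hR : R.PosDef)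
    (t : Fin v → ℝ) (q : Fin v → (Fin 2 → ℝ)) (hq : ∀ j, q j = ![t j, 1])
    (Z : Fin v → Matrix (Fin K) (Fin 2) ℝ) (hZ : ∀ j, Z j = vecMulVec a (q j))
    (w z : ℝ) (hw : w ≠ 0)
    (astar : Fin K → ℝ) (hastar : astar = w⁻¹ • a)
    (bstar : Fin K → ℝ) (hbstar : bstar = b - (z / w) • a)
    (mstar : Fin 2 → ℝ) (hmstar : mstar = w • m + ![0, z])
    (Vstar : Matrix (Fin 2) (Fin 2) ℝ) (hVstar : Vstar = (w ^ 2) • V)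
    (Zstar : Fin v → Matrix (Fin K) (Fin 2) ℝ)
    (hZstar : ∀ j, Zstar j = vecMulVec astar (q j)) :
    (∀ j, Zstar j *ᵥ mstar + bstar = Z j *ᵥ m + b) ∧
      (∀ j j', Zstar j * Vstar * (Zstar j')ᵀ + (if j = j' then R else 0) =
        Z j * V * (Z j')ᵀ + (if j = j' then R else 0)) := by
  constructor
  · intro j
    funext i
    simp only [hZstar, hZ, hastar, hbstar, hmstar, hq, Pi.add_apply, Pi.sub_apply,
      Pi.smul_apply, mulVec, dotProduct, vecMulVec_apply, Fin.sum_univ_two,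
      Matrix.cons_val_zero, Matrix.cons_val_one, Matrix.head_cons, smul_eq_mul]
    field_simp
    ring
  · intro j j'
    congr 1
    funext i i'
    simp only [hZstar, hZ, hastar, hVstar, hq, mul_apply, transpose_apply,
      vecMulVec_apply, Fin.sum_univ_two, Matrix.cons_val_zero, Matrix.cons_val_one,
      Matrix.head_cons, Matrix.smul_apply, Pi.smul_apply, smul_eq_mul]
    field_simp
end

section
/- Let w ≠ 0 be a real number and consider the reparametrization a* = (1/w) a, b* = b, m* = w m, V* = w² V (the case z = 0), with Z*_j = a* q_jᵀ. Define û and Σ' from (a, b, m, V) and û* and Σ'* from (a*, b*, m*, V*) by the posterior formulas. Then Σ'* = w² Σ' and û* = w û. -/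
open Matrix BigOperators

set_option maxHeartbeats 1000000 in
/-- Under the reparametrization `a* = (1/w) a`, `b* = b`, `m* = w m`, `V* = w² V` (the case
`z = 0`), the posterior covariance and mean transform as `Σ'* = w² Σ'` and `û* = w û`. -/
theorem stmt_14 {K v : ℕ} (hK : 0 < K) (hv : 0 < v)
    (y : Fin v → (Fin K → ℝ)) (a b : Fin K → ℝ)
    (q : Fin v → (Fin 2 → ℝ)) (m : Fin 2 → ℝ)
    (R : Matrix (Fin K) (Fin K) ℝ) (hR : R.PosDef)
    (V : Matrix (Fin 2) (Fin 2) ℝ) (hV : V.PosDef)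
    (w : ℝ) (hw : w ≠ 0)
    (astar : Fin K → ℝ) (hastar : astar = w⁻¹ • a)
    (bstar : Fin K → ℝ) (hbstar : bstar = b)
    (mstar : Fin 2 → ℝ) (hmstar : mstar = w • m)
    (Vstar : Matrix (Fin 2) (Fin 2) ℝ) (hVstar : Vstar = (w ^ 2) • V)
    (Z : Fin v → Matrix (Fin K) (Fin 2) ℝ) (hZ : ∀ j, Z j = vecMulVec a (q j))
    (Zstar : Fin v → Matrix (Fin K) (Fin 2) ℝ)
    (hZstar : ∀ j, Zstar j = vecMulVec astar (q j))
    (Sig : Matrix (Fin 2) (Fin 2) ℝ)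
    (hSig : Sig = ((∑ j, (Z j)ᵀ * R⁻¹ * Z j) + V⁻¹)⁻¹)
    (uhat : Fin 2 → ℝ)
    (huhat : uhat = Sig *ᵥ ((∑ j, (Z j)ᵀ *ᵥ (R⁻¹ *ᵥ (y j - b))) + V⁻¹ *ᵥ m))
    (Sigstar : Matrix (Fin 2) (Fin 2) ℝ)
    (hSigstar : Sigstar = ((∑ j, (Zstar j)ᵀ * R⁻¹ * Zstar j) + Vstar⁻¹)⁻¹)
    (uhatstar : Fin 2 → ℝ)
    (huhatstar : uhatstar =
      Sigstar *ᵥ ((∑ j, (Zstar j)ᵀ *ᵥ (R⁻¹ *ᵥ (y j - bstar))) + Vstar⁻¹ *ᵥ mstar)) :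
    Sigstar = (w ^ 2) • Sig ∧ uhatstar = w • uhat := by
  haveI : Invertible (w ^ 2) := invertibleOfNonzero (pow_ne_zero 2 hw)
  haveI : Invertible ((w ^ 2)⁻¹ : ℝ) := invertibleOfNonzero (inv_ne_zero (pow_ne_zero 2 hw))
  have hZs : ∀ j, Zstar j = w⁻¹ • Z j := by
    intro j
    rw [hZstar, hZ, hastar]
    ext i k
    simp [vecMulVec_apply, mul_assoc]
  -- positivity of the inner matrix
  set M := (∑ j, (Z j)ᵀ * R⁻¹ * Z j) + V⁻¹ with hM
  have hsum : (∑ j, (Z j)ᵀ * R⁻¹ * Z j).PosSemidef := by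
    apply Finset.sum_induction _ _ (fun A B hA hB => hA.add hB) Matrix.PosSemidef.zero
    intro j _
    have := hR.inv.posSemidef.conjTranspose_mul_mul_same (Z j)
    simpa using this
  have hMpd : M.PosDef := Matrix.PosDef.posSemidef_add hsum hV.inv
  have hMdet : IsUnit M.det := isUnit_iff_ne_zero.mpr hMpd.det_pos.ne'
  have hVdet : IsUnit V.det := isUnit_iff_ne_zero.mpr hV.det_pos.ne'
  have hVinv : Vstar⁻¹ = (w ^ 2)⁻¹ • V⁻¹ := by
    rw [hVstar, Matrix.inv_smul (A := V) (k := w ^ 2) hVdet, invOf_eq_inv]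
  have hinner : (∑ j, (Zstar j)ᵀ * R⁻¹ * Zstar j) + Vstar⁻¹ = (w ^ 2)⁻¹ • M := by
    rw [hVinv, hM, smul_add, Finset.smul_sum]
    congr 1
    apply Finset.sum_congr rfl
    intro j _
    rw [hZs j]
    rw [Matrix.transpose_smul, Matrix.smul_mul, Matrix.smul_mul, Matrix.mul_smul,
      smul_smul]
    congr 1
    rw [pow_two, mul_inv]
  have hSigEq : Sigstar = (w ^ 2) • Sig := by
    rw [hSigstar, hinner, Matrix.inv_smul (A := M) (k := (w ^ 2)⁻¹) hMdet,
      invOf_eq_inv, inv_inv, hSig]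
  refine ⟨hSigEq, ?_⟩
  have hvec : (∑ j, (Zstar j)ᵀ *ᵥ (R⁻¹ *ᵥ (y j - bstar))) + Vstar⁻¹ *ᵥ mstar
      = w⁻¹ • ((∑ j, (Z j)ᵀ *ᵥ (R⁻¹ *ᵥ (y j - b))) + V⁻¹ *ᵥ m) := by
    rw [hbstar, hmstar, hVinv, smul_add, Finset.smul_sum]
    congr 1
    · apply Finset.sum_congr rfl
      intro j _
      rw [hZs j, Matrix.transpose_smul, Matrix.smul_mulVec]
    · rw [Matrix.smul_mulVec, Matrix.mulVec_smul, smul_smul, pow_two, mul_inv,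
        mul_assoc, inv_mul_cancel₀ hw, mul_one]
  rw [huhatstar, hvec, hSigEq, Matrix.smul_mulVec, Matrix.mulVec_smul, huhat,
    smul_smul, pow_two, mul_assoc, mul_inv_cancel₀ hw, mul_one]
end

section
/- Let w ≠ 0 be a real number and consider the reparametrization a* = (1/w) a, b* = b, m* = w m, V* = w² V (the case z = 0). Then the incomplete log-likelihood expression L(θ) = ½ Σ_i (log|2π Σ'_i| − log|2π V| − v_i log|2π R|) − ½ Σ_{i,j} (y_{ij} − b)ᵀ R⁻¹ (y_{ij} − b) − ½ Σ_i mᵀ V⁻¹ m + ½ Σ_i û_iᵀ Σ'_i⁻¹ û_i is invariant: L(θ*) = L(θ). In particular, each individual piece is invariant: |Σ'*_i|/|V*| = |Σ'_i|/|V|, (y_{ij} − b*) = (y_{ij} − b), m*ᵀ V*⁻¹ m* = mᵀ V⁻¹ m, and û*_iᵀ Σ'*_i⁻¹ û*_i = û_iᵀ Σ'_i⁻¹ û_i. -/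
open Matrix BigOperators Real

set_option maxHeartbeats 1000000 in
/-- Under the reparametrization `a* = (1/w) a`, `b* = b`, `m* = w m`, `V* = w² V` (the case
`z = 0`), the incomplete log-likelihood expression is invariant: `L(θ*) = L(θ)`.
In particular each piece is invariant: `|Σ'*ᵢ|/|V*| = |Σ'ᵢ|/|V|`, `b* = b`,
`m*ᵀ V*⁻¹ m* = mᵀ V⁻¹ m`, and `û*ᵢᵀ Σ'*ᵢ⁻¹ û*ᵢ = ûᵢᵀ Σ'ᵢ⁻¹ ûᵢ`. -/
theorem stmt_15 {K n : ℕ} (hK : 0 < K) (hn : 0 < n)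
    (v : Fin n → ℕ) (hv : ∀ i, 1 ≤ v i)
    (y : (i : Fin n) → Fin (v i) → (Fin K → ℝ))
    (q : (i : Fin n) → Fin (v i) → (Fin 2 → ℝ))
    (a b : Fin K → ℝ) (m : Fin 2 → ℝ)
    (R : Matrix (Fin K) (Fin K) ℝ) (hR : R.PosDef)
    (V : Matrix (Fin 2) (Fin 2) ℝ) (hV : V.PosDef)
    (w : ℝ) (hw : w ≠ 0)
    (astar : Fin K → ℝ) (hastar : astar = w⁻¹ • a)
    (bstar : Fin K → ℝ) (hbstar : bstar = b)
    (mstar : Fin 2 → ℝ) (hmstar : mstar = w • m)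
    (Vstar : Matrix (Fin 2) (Fin 2) ℝ) (hVstar : Vstar = (w ^ 2) • V)
    (Z : (i : Fin n) → Fin (v i) → Matrix (Fin K) (Fin 2) ℝ)
    (hZ : ∀ i j, Z i j = vecMulVec a (q i j))
    (Zstar : (i : Fin n) → Fin (v i) → Matrix (Fin K) (Fin 2) ℝ)
    (hZstar : ∀ i j, Zstar i j = vecMulVec astar (q i j))
    (Sig : Fin n → Matrix (Fin 2) (Fin 2) ℝ)
    (hSig : ∀ i, Sig i = ((∑ j, (Z i j)ᵀ * R⁻¹ * Z i j) + V⁻¹)⁻¹)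
    (uhat : Fin n → (Fin 2 → ℝ))
    (huhat : ∀ i, uhat i =
      Sig i *ᵥ ((∑ j, (Z i j)ᵀ *ᵥ (R⁻¹ *ᵥ (y i j - b))) + V⁻¹ *ᵥ m))
    (Sigstar : Fin n → Matrix (Fin 2) (Fin 2) ℝ)
    (hSigstar : ∀ i, Sigstar i = ((∑ j, (Zstar i j)ᵀ * R⁻¹ * Zstar i j) + Vstar⁻¹)⁻¹)
    (uhatstar : Fin n → (Fin 2 → ℝ))
    (huhatstar : ∀ i, uhatstar i =
      Sigstar i *ᵥ ((∑ j, (Zstar i j)ᵀ *ᵥ (R⁻¹ *ᵥ (y i j - bstar))) + Vstar⁻¹ *ᵥ mstar))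
    (L Lstar : ℝ)
    (hL : L = (1 / 2) * (∑ i, (Real.log (((2 * π) • Sig i).det)
          - Real.log (((2 * π) • V).det) - (v i : ℝ) * Real.log (((2 * π) • R).det)))
        - (1 / 2) * (∑ i, ∑ j, (y i j - b) ⬝ᵥ (R⁻¹ *ᵥ (y i j - b)))
        - (1 / 2) * (∑ _i : Fin n, m ⬝ᵥ (V⁻¹ *ᵥ m))
        + (1 / 2) * (∑ i, uhat i ⬝ᵥ ((Sig i)⁻¹ *ᵥ uhat i)))
    (hLstar : Lstar = (1 / 2) * (∑ i, (Real.log (((2 * π) • Sigstar i).det)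
          - Real.log (((2 * π) • Vstar).det) - (v i : ℝ) * Real.log (((2 * π) • R).det)))
        - (1 / 2) * (∑ i, ∑ j, (y i j - bstar) ⬝ᵥ (R⁻¹ *ᵥ (y i j - bstar)))
        - (1 / 2) * (∑ _i : Fin n, mstar ⬝ᵥ (Vstar⁻¹ *ᵥ mstar))
        + (1 / 2) * (∑ i, uhatstar i ⬝ᵥ ((Sigstar i)⁻¹ *ᵥ uhatstar i))) :
    Lstar = L ∧
      (∀ i, (Sigstar i).det / Vstar.det = (Sig i).det / V.det) ∧
      bstar = b ∧
      mstar ⬝ᵥ (Vstar⁻¹ *ᵥ mstar) = m ⬝ᵥ (V⁻¹ *ᵥ m) ∧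
      (∀ i, uhatstar i ⬝ᵥ ((Sigstar i)⁻¹ *ᵥ uhatstar i) =
        uhat i ⬝ᵥ ((Sig i)⁻¹ *ᵥ uhat i)) := by
  have hc : (w ^ 2 : ℝ) ≠ 0 := pow_ne_zero 2 hw
  -- Zstar = w⁻¹ • Z
  have hZs : ∀ i j, Zstar i j = w⁻¹ • Z i j := by
    intro i j
    rw [hZstar, hZ, hastar]
    ext r s
    simp [vecMulVec_apply, mul_assoc]
  have smulinv : ∀ {N : Type} [Fintype N] [DecidableEq N] (c : ℝ), c ≠ 0 →
      ∀ (A : Matrix N N ℝ), IsUnit A.det → (c • A)⁻¹ = c⁻¹ • A⁻¹ := by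
    intro N _ _ c hc0 A hA
    refine Matrix.inv_eq_right_inv ?_
    rw [Matrix.smul_mul, Matrix.mul_smul, smul_smul, mul_inv_cancel₀ hc0, one_smul,
      Matrix.mul_nonsing_inv A hA]
  -- Vstar⁻¹ = (w^2)⁻¹ • V⁻¹
  have hVinv : Vstar⁻¹ = (w ^ 2)⁻¹ • V⁻¹ := by
    rw [hVstar, smulinv _ hc V hV.det_pos.ne'.isUnit]
  -- positivity facts
  have hpsd : ∀ i, (∑ j, (Z i j)ᵀ * R⁻¹ * Z i j).PosSemidef := by
    intro i
    refine Finset.sum_induction (fun j => (Z i j)ᵀ * R⁻¹ * Z i j) Matrix.PosSemidef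
      (fun A B hA hB => hA.add hB) Matrix.PosSemidef.zero (fun j _ => ?_)
    have := hR.inv.posSemidef.conjTranspose_mul_mul_same (Z i j)
    simpa [Matrix.conjTranspose_eq_transpose_of_trivial] using this
  have hSpd : ∀ i, ((∑ j, (Z i j)ᵀ * R⁻¹ * Z i j) + V⁻¹).PosDef :=
    fun i => Matrix.PosDef.posSemidef_add (hpsd i) hV.inv
  have hSigpd : ∀ i, (Sig i).PosDef := fun i => (hSig i) ▸ (hSpd i).inv
  -- scaled inner matrix
  have hSstar : ∀ i, (∑ j, (Zstar i j)ᵀ * R⁻¹ * Zstar i j) + Vstar⁻¹ =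
      (w ^ 2)⁻¹ • ((∑ j, (Z i j)ᵀ * R⁻¹ * Z i j) + V⁻¹) := by
    intro i
    rw [hVinv, smul_add, Finset.smul_sum]
    congr 1
    refine Finset.sum_congr rfl fun j _ => ?_
    rw [hZs i j, Matrix.transpose_smul, Matrix.smul_mul, Matrix.smul_mul,
      Matrix.mul_smul, smul_smul, pow_two, mul_inv]
  have hSigs : ∀ i, Sigstar i = (w ^ 2) • Sig i := by
    intro i
    rw [hSigstar, hSstar, smulinv _ (inv_ne_zero hc) _ (hSpd i).det_pos.ne'.isUnit,
      inv_inv, hSig]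
  have hSiginv : ∀ i, (Sigstar i)⁻¹ = (w ^ 2)⁻¹ • (Sig i)⁻¹ := by
    intro i
    rw [hSigs, smulinv _ hc _ (hSigpd i).det_pos.ne'.isUnit]
  -- uhatstar = w • uhat
  have hus : ∀ i, uhatstar i = w • uhat i := by
    intro i
    rw [huhatstar, hSigs, huhat, hbstar, hmstar, hVinv]
    have h1 : (∑ j, (Zstar i j)ᵀ *ᵥ (R⁻¹ *ᵥ (y i j - b))) =
        w⁻¹ • ∑ j, (Z i j)ᵀ *ᵥ (R⁻¹ *ᵥ (y i j - b)) := by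
      rw [Finset.smul_sum]
      refine Finset.sum_congr rfl fun j _ => ?_
      rw [hZs i j, Matrix.transpose_smul, Matrix.smul_mulVec]
    have h2 : ((w ^ 2)⁻¹ • V⁻¹) *ᵥ (w • m) = w⁻¹ • (V⁻¹ *ᵥ m) := by
      rw [Matrix.smul_mulVec, Matrix.mulVec_smul, smul_smul]
      congr 1
      field_simp
    rw [h1, h2, ← smul_add, Matrix.smul_mulVec, Matrix.mulVec_smul, smul_smul]
    congr 1
    field_simp
  -- m quadratic form invariance
  have hmquad : mstar ⬝ᵥ (Vstar⁻¹ *ᵥ mstar) = m ⬝ᵥ (V⁻¹ *ᵥ m) := by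
    rw [hmstar, hVinv]
    simp only [Matrix.smul_mulVec, Matrix.mulVec_smul, smul_dotProduct,
      dotProduct_smul, smul_eq_mul]
    field_simp
  -- uhat quadratic form invariance
  have huquad : ∀ i, uhatstar i ⬝ᵥ ((Sigstar i)⁻¹ *ᵥ uhatstar i) =
      uhat i ⬝ᵥ ((Sig i)⁻¹ *ᵥ uhat i) := by
    intro i
    rw [hus i, hSiginv i]
    simp only [Matrix.smul_mulVec, Matrix.mulVec_smul, smul_dotProduct,
      dotProduct_smul, smul_eq_mul]
    field_simp
  -- determinant ratio invariance
  have hdet : ∀ i, (Sigstar i).det / Vstar.det = (Sig i).det / V.det := by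
    intro i
    rw [hSigs, hVstar, Matrix.det_smul, Matrix.det_smul]
    simp only [Fintype.card_fin]
    exact mul_div_mul_left _ _ (pow_ne_zero 2 hc)
  -- log-term invariance
  have hlog : ∀ i, Real.log (((2 * π) • Sigstar i).det) - Real.log (((2 * π) • Vstar).det)
      = Real.log (((2 * π) • Sig i).det) - Real.log (((2 * π) • V).det) := by
    intro i
    have h2pi : (2 * π : ℝ) ≠ 0 := by positivity
    have hb : ((2 * π : ℝ) ^ 2) ≠ 0 := pow_ne_zero 2 h2pi
    have hcc : ((w ^ 2 : ℝ) ^ 2) ≠ 0 := pow_ne_zero 2 hc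
    rw [hSigs i, hVstar]
    rw [smul_smul, smul_smul, Matrix.det_smul, Matrix.det_smul, Matrix.det_smul,
      Matrix.det_smul]
    simp only [Fintype.card_fin]
    have hd : ((2 * π * w ^ 2 : ℝ) ^ 2) ≠ 0 := pow_ne_zero 2 (mul_ne_zero h2pi hc)
    rw [Real.log_mul hd (hSigpd i).det_pos.ne',
      Real.log_mul hd hV.det_pos.ne',
      Real.log_mul hb (hSigpd i).det_pos.ne',
      Real.log_mul hb hV.det_pos.ne']
    ring
  refine ⟨?_, hdet, hbstar, hmquad, huquad⟩
  rw [hLstar, hL, hbstar, hmquad]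
  have hsum1 : (∑ i, (Real.log (((2 * π) • Sigstar i).det)
      - Real.log (((2 * π) • Vstar).det) - (v i : ℝ) * Real.log (((2 * π) • R).det)))
      = ∑ i, (Real.log (((2 * π) • Sig i).det)
      - Real.log (((2 * π) • V).det) - (v i : ℝ) * Real.log (((2 * π) • R).det)) := by
    refine Finset.sum_congr rfl fun i _ => ?_
    have := hlog i
    linarith
  have hsum2 : (∑ i, uhatstar i ⬝ᵥ ((Sigstar i)⁻¹ *ᵥ uhatstar i))
      = ∑ i, uhat i ⬝ᵥ ((Sig i)⁻¹ *ᵥ uhat i) :=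
    Finset.sum_congr rfl fun i _ => huquad i
  rw [hsum1, hsum2]
end
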